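/- (Soundness and adequacy of rederivation.) Let Π be a Datalog program, E a dataset, I = mat(Π, E), E⁻′ ⊆ E, and let D be the overdeletion set defined by D_0 = ∅, N_0 = E⁻′, Δ⁻_k = N_k \ D_k, N_{k+1} = ⋃_{r∈Π} ( r[(I \ D_k) ∸ Δ⁻_k] ∩ ((I \ D_k) \ Δ⁻_k) ), D_{k+1} = D_k ∪ Δ⁻_k, D = ⋃_k D_k. Let R = ((E \ E⁻′) ∩ D) ∪ ⋃_{r∈Π} ( r[I \ D] ∩ D ). Then (I \ D) ∪ R ⊆ mat(Π, E \ E⁻′), and mat(Π, (I \ D) ∪ R) = mat(Π, E \ E⁻′): the facts surviving overdeletion together with the rederived facts are sound, and their closure under Π recovers exactly the materialisation of the reduced dataset. -/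
import Mathlib


namespace Datalog

/-- An atom `P(t₁,…,tₖ)`: a predicate symbol applied to a list of terms, where
`Sum.inl v` denotes the variable `v` and `Sum.inr c` denotes the constant `c`. -/
structure Atom where
  pred : ℕ
  args : List (ℕ ⊕ ℕ)
deriving DecidableEq

/-- A fact: a variable-free atom, i.e. a predicate applied to constants only. -/
structure Fact where
  pred : ℕ
  args : List ℕ
deriving DecidableEq

/-- Applying a substitution `σ` (a map from variables to constants) to an atom. -/
def Atom.subst (A : Atom) (σ : ℕ → ℕ) : Fact :=
  ⟨A.pred, A.args.map (Sum.elim σ id)⟩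

/-- The set of variables occurring in an atom. -/
def Atom.vars (A : Atom) : Set ℕ := { v | Sum.inl v ∈ A.args }

/-- A Datalog rule: a head atom and a finite set of body atoms, which is safe:
every variable of the head occurs in some body atom. -/
structure Rule where
  head : Atom
  body : Finset Atom
  safe : ∀ v ∈ head.vars, ∃ B ∈ body, v ∈ B.vars

/-- `r[I] = { h(rσ) | b(rσ) ⊆ I }`. -/
def Rule.eval (r : Rule) (I : Set Fact) : Set Fact :=
  { f | ∃ σ : ℕ → ℕ, (∀ B ∈ r.body, B.subst σ ∈ I) ∧ f = r.head.subst σ }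

/-- `r[I ∸ Δ] = { h(rσ) | b(rσ) ⊆ I and b(rσ) ∩ Δ ≠ ∅ }`. -/
def Rule.evalDelta (r : Rule) (I Δ : Set Fact) : Set Fact :=
  { f | ∃ σ : ℕ → ℕ, (∀ B ∈ r.body, B.subst σ ∈ I) ∧
        (∃ B ∈ r.body, B.subst σ ∈ Δ) ∧ f = r.head.subst σ }

/-- `Π[I] = ⋃_{r ∈ Π} r[I]`. -/
def progEval (P : Set Rule) (I : Set Fact) : Set Fact := ⋃ r ∈ P, r.eval I

/-- `Π[I ∸ Δ] = ⋃_{r ∈ Π} r[I ∸ Δ]`. -/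
def progEvalDelta (P : Set Rule) (I Δ : Set Fact) : Set Fact := ⋃ r ∈ P, r.evalDelta I Δ

/-- `I_0 = E`, `I_{i+1} = I_i ∪ Π[I_i]`. -/
def matSeq (P : Set Rule) (E : Set Fact) : ℕ → Set Fact
  | 0 => E
  | n + 1 => matSeq P E n ∪ progEval P (matSeq P E n)

/-- The materialisation `mat(Π, E) = ⋃_{i ≥ 0} I_i`. -/
def mat (P : Set Rule) (E : Set Fact) : Set Fact := ⋃ n, matSeq P E n

/-- The overdeletion sequence `(D_k, N_k)`: `D_0 = ∅`, `N_0 = E⁻′`,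
`Δ⁻_k = N_k \ D_k`,
`N_{k+1} = ⋃_{r∈Π} (r[(I \ D_k) ∸ Δ⁻_k] ∩ ((I \ D_k) \ Δ⁻_k))`,
`D_{k+1} = D_k ∪ Δ⁻_k`. -/
def delSeq (P : Set Rule) (I Em : Set Fact) : ℕ → Set Fact × Set Fact
  | 0 => (∅, Em)
  | k + 1 =>
      let s := delSeq P I Em k
      let Δ := s.2 \ s.1
      (s.1 ∪ Δ, ⋃ r ∈ P, (r.evalDelta (I \ s.1) Δ ∩ ((I \ s.1) \ Δ)))

lemma matSeq_le (P : Set Rule) (E : Set Fact) {m n : ℕ} (h : m ≤ n) :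
    matSeq P E m ⊆ matSeq P E n := by
  induction n with
  | zero => simp_all
  | succ n ih =>
    rcases Nat.eq_or_lt_of_le h with h' | h'
    · subst h'; exact Set.Subset.refl _
    · exact (ih (Nat.lt_succ_iff.mp h')).trans Set.subset_union_left

lemma matSeq_subset_mat (P : Set Rule) (E : Set Fact) (n : ℕ) :
    matSeq P E n ⊆ mat P E := Set.subset_iUnion (fun n => matSeq P E n) n

lemma subset_mat (P : Set Rule) (E : Set Fact) : E ⊆ mat P E :=
  matSeq_subset_mat P E 0

lemma Rule.eval_mono (r : Rule) {I J : Set Fact} (h : I ⊆ J) : r.eval I ⊆ r.eval J := by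
  rintro f ⟨σ, hσ, rfl⟩
  exact ⟨σ, fun B hB => h (hσ B hB), rfl⟩

lemma progEval_mono (P : Set Rule) {I J : Set Fact} (h : I ⊆ J) :
    progEval P I ⊆ progEval P J := by
  intro f hf
  simp only [progEval, Set.mem_iUnion] at hf ⊢
  obtain ⟨r, hr, hfr⟩ := hf
  exact ⟨r, hr, r.eval_mono h hfr⟩

lemma mat_closed (P : Set Rule) (E : Set Fact) : progEval P (mat P E) ⊆ mat P E := by
  classical
  intro f hf
  simp only [progEval, Set.mem_iUnion] at hf
  obtain ⟨r, hr, σ, hσ, rfl⟩ := hf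
  have hstage : ∀ B ∈ r.body, ∃ n, B.subst σ ∈ matSeq P E n := by
    intro B hB
    have := hσ B hB
    simpa [mat, Set.mem_iUnion] using this
  set g : Atom → ℕ := fun B => if h : B ∈ r.body ∧ ∃ n, B.subst σ ∈ matSeq P E n
    then Nat.find h.2 else 0 with hg
  set N : ℕ := r.body.sup g with hN
  have hall : ∀ B ∈ r.body, B.subst σ ∈ matSeq P E N := by
    intro B hB
    have hx : B ∈ r.body ∧ ∃ n, B.subst σ ∈ matSeq P E n := ⟨hB, hstage B hB⟩
    have h1 : B.subst σ ∈ matSeq P E (g B) := by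
      simp only [hg, dif_pos hx]
      exact Nat.find_spec hx.2
    exact matSeq_le P E (Finset.le_sup hB) h1
  have : r.head.subst σ ∈ matSeq P E (N + 1) := by
    refine Set.mem_union_right _ ?_
    simp only [progEval, Set.mem_iUnion]
    exact ⟨r, hr, σ, hall, rfl⟩
  exact matSeq_subset_mat P E (N + 1) this

lemma mat_mono (P : Set Rule) {E F : Set Fact} (h : E ⊆ F) : mat P E ⊆ mat P F := by
  have : ∀ n, matSeq P E n ⊆ matSeq P F n := by
    intro n
    induction n with
    | zero => exact h
    | succ n ih => exact Set.union_subset_union ih (progEval_mono P ih)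
  exact Set.iUnion_mono this

lemma mat_of_subset_mat (P : Set Rule) {X E : Set Fact} (h : X ⊆ mat P E) :
    mat P X ⊆ mat P E := by
  have : ∀ n, matSeq P X n ⊆ mat P E := by
    intro n
    induction n with
    | zero => exact h
    | succ n ih =>
      refine Set.union_subset ih ?_
      exact (progEval_mono P ih).trans (mat_closed P E)
  exact Set.iUnion_subset this

/-- soundness and adequacy of rederivation:
`(I \ D) ∪ R ⊆ mat(Π, E \ E⁻′)` and `mat(Π, (I \ D) ∪ R) = mat(Π, E \ E⁻′)`. -/
theorem rederivation_sound_adequate (P : Set Rule) (hP : P.Finite)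
    (hne : ∀ r ∈ P, r.body.Nonempty)
    (E Em I : Set Fact) (hI : I = mat P E) (hEm : Em ⊆ E)
    (D : Set Fact) (hD : D = ⋃ k, (delSeq P I Em k).1)
    (R : Set Fact) (hR : R = ((E \ Em) ∩ D) ∪ ⋃ r ∈ P, (r.eval (I \ D) ∩ D)) :
    (I \ D) ∪ R ⊆ mat P (E \ Em) ∧ mat P ((I \ D) ∪ R) = mat P (E \ Em) := by
  classical
  set Dk : ℕ → Set Fact := fun k => (delSeq P I Em k).1 with hDk
  have hDkstep : ∀ k, Dk (k + 1) =
      Dk k ∪ ((delSeq P I Em k).2 \ (delSeq P I Em k).1) := by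
    intro k; rfl
  have hDkmono : ∀ {j k : ℕ}, j ≤ k → Dk j ⊆ Dk k := by
    intro j k h
    induction k with
    | zero => simp_all
    | succ k ih =>
      rcases Nat.eq_or_lt_of_le h with h' | h'
      · subst h'; exact Set.Subset.refl _
      · exact (ih (Nat.lt_succ_iff.mp h')).trans
          (by rw [hDkstep k]; exact Set.subset_union_left)
  have hDkD : ∀ k, Dk k ⊆ D := by
    intro k; rw [hD]; exact Set.subset_iUnion (fun k => (delSeq P I Em k).1) k
  have hEmD : Em ⊆ D := by
    have h1 : Dk 1 = Em := by simp [hDk, delSeq]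
    intro x hx; exact hDkD 1 (h1 ▸ hx)
  -- the key soundness claim
  have key : ∀ n, ∀ f ∈ matSeq P E n, f ∉ D → f ∈ mat P (E \ Em) := by
    intro n
    induction n with
    | zero =>
      intro f hf hfD
      exact subset_mat P (E \ Em) ⟨hf, fun h => hfD (hEmD h)⟩
    | succ n ih =>
      intro f hf hfD
      rcases hf with hf | hf
      · exact ih f hf hfD
      · simp only [progEval, Set.mem_iUnion] at hf
        obtain ⟨r, hr, σ, hσ, rfl⟩ := hf
        by_cases hall : ∀ B ∈ r.body, B.subst σ ∉ D
        · -- all body facts survive: derive via IH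
          have hbody : ∀ B ∈ r.body, B.subst σ ∈ mat P (E \ Em) := fun B hB =>
            ih _ (hσ B hB) (hall B hB)
          refine mat_closed P (E \ Em) ?_
          simp only [progEval, Set.mem_iUnion]
          exact ⟨r, hr, σ, hbody, rfl⟩
        · -- some body fact deleted: contradiction with f ∉ D
          exfalso
          push_neg at hall
          obtain ⟨B0, hB0, hB0D⟩ := hall
          have hQex : ∃ k, ∃ B ∈ r.body, B.subst σ ∈ Dk k := by
            rw [hD] at hB0D
            simp only [Set.mem_iUnion] at hB0D
            obtain ⟨k, hk⟩ := hB0D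
            exact ⟨k, B0, hB0, hk⟩
          set m := Nat.find hQex with hm
          have hm0 : m ≠ 0 := by
            intro h
            have := Nat.find_spec hQex
            rw [← hm, h] at this
            obtain ⟨B, _, hBmem⟩ := this
            simp [hDk, delSeq] at hBmem
          obtain ⟨j, hj⟩ := Nat.exists_eq_succ_of_ne_zero hm0
          have hmin : ∀ B ∈ r.body, B.subst σ ∉ Dk j := by
            intro B hB hBj
            exact Nat.find_min hQex (by omega) ⟨B, hB, hBj⟩
          have hspec : ∃ B ∈ r.body, B.subst σ ∈ Dk (j + 1) := by
            have := Nat.find_spec hQex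
            rwa [← hm, hj] at this
          obtain ⟨B1, hB1, hB1mem⟩ := hspec
          have hB1Δ : B1.subst σ ∈ (delSeq P I Em j).2 \ (delSeq P I Em j).1 := by
            rw [hDkstep j] at hB1mem
            rcases hB1mem with h | h
            · exact absurd h (hmin B1 hB1)
            · exact h
          have hbodyI : ∀ B ∈ r.body, B.subst σ ∈ I \ Dk j := by
            intro B hB
            refine ⟨?_, hmin B hB⟩
            rw [hI]
            exact matSeq_subset_mat P E n (hσ B hB)
          have hfI : r.head.subst σ ∈ I := by
            rw [hI]
            refine matSeq_subset_mat P E (n + 1) (Set.mem_union_right _ ?_)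
            simp only [progEval, Set.mem_iUnion]
            exact ⟨r, hr, σ, hσ, rfl⟩
          -- f lands in N_{j+1}
          have hfN : r.head.subst σ ∈ (delSeq P I Em (j + 1)).2 := by
            show r.head.subst σ ∈ ⋃ r' ∈ P, (r'.evalDelta (I \ (delSeq P I Em j).1)
              ((delSeq P I Em j).2 \ (delSeq P I Em j).1) ∩
              ((I \ (delSeq P I Em j).1) \ ((delSeq P I Em j).2 \ (delSeq P I Em j).1)))
            simp only [Set.mem_iUnion]
            refine ⟨r, hr, ⟨σ, hbodyI, ⟨B1, hB1, hB1Δ⟩, rfl⟩, ?_⟩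
            refine ⟨⟨hfI, fun h => hfD (hDkD j h)⟩, fun h => hfD ?_⟩
            refine hDkD (j + 1) ?_
            rw [hDkstep j]
            exact Set.mem_union_right _ h
          -- hence f ∈ Dk (j+2) ⊆ D, contradiction
          have hfΔ : r.head.subst σ ∈ Dk (j + 2) := by
            rw [hDkstep (j + 1)]
            refine Set.mem_union_right _ ⟨hfN, fun h => hfD (hDkD (j + 1) h)⟩
          exact hfD (hDkD (j + 2) hfΔ)
  have hIDsub : I \ D ⊆ mat P (E \ Em) := by
    rintro f ⟨hfI, hfD⟩
    rw [hI] at hfI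
    simp only [mat, Set.mem_iUnion] at hfI
    obtain ⟨n, hn⟩ := hfI
    exact key n f hn hfD
  have hRsub : R ⊆ mat P (E \ Em) := by
    rw [hR]
    refine Set.union_subset ?_ ?_
    · exact (Set.inter_subset_left).trans (subset_mat P (E \ Em))
    · refine Set.iUnion_subset fun r => Set.iUnion_subset fun hr => ?_
      refine (Set.inter_subset_left).trans ?_
      refine (r.eval_mono hIDsub).trans ?_
      refine Set.Subset.trans ?_ (mat_closed P (E \ Em))
      intro f hf
      simp only [progEval, Set.mem_iUnion]
      exact ⟨r, hr, hf⟩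
  have h1 : (I \ D) ∪ R ⊆ mat P (E \ Em) := Set.union_subset hIDsub hRsub
  refine ⟨h1, le_antisymm (mat_of_subset_mat P h1) ?_⟩
  refine mat_mono P ?_
  intro x hx
  by_cases hxD : x ∈ D
  · right
    rw [hR]
    exact Set.mem_union_left _ ⟨hx, hxD⟩
  · left
    exact ⟨hI ▸ subset_mat P E (hx.1), hxD⟩

end Datalog
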